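/- arXiv:1905.04434 — 4 statements merged into one kernel-verified Lean document; each statement's English description precedes it below -/
import Mathlib

section
/- There exists an instance of the optimal perimeter guarding problem on a circle in which every optimal cover entirely contains the unique largest gap. Concretely: on a circle with four segments S_1, S_2, S_3, S_4 of equal length s and four gaps, three of length a (evenly spaced, i.e., len(S_1) = len(S_2) = len(S_3) + len(G_3) + len(S_4)) and one gap G_3 of length 3a/2, with n = 3 robots, the optimal cover is {S_1, S_2, S_3 ∪ G_3 ∪ S_4}, which covers G_3, and any cover that skips G_3 has some arc strictly longer than len(S_1). -/
/-- A closed arc on the circle of circumference `T`. -/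
def carc (T : ℝ) (a b : ℝ) : Set (AddCircle T) :=
  (fun x : ℝ => (x : AddCircle T)) '' Set.Icc a b

/-- An open arc on the circle of circumference `T`. -/
def oarc (T : ℝ) (a b : ℝ) : Set (AddCircle T) :=
  (fun x : ℝ => (x : AddCircle T)) '' Set.Ioo a b

/-!
Cut the circle open at the gap `G₃`, whose right end `p` is the left end of `S₄`: unrolling
from `p` turns the rest of the circle into the segment `[p, p + 3s + 3a/2]`. An arc skipping `G₃`
lifts to an interval inside that segment, and a cover skipping `G₃` becomes a cover of the lifted
`S₄, S₁, S₂, S₃` by three intervals. If each has length at most `s`, the one through `p` ends by `p + s` and the one through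
the far end starts after `p + 2s + 3a/2`; the third must then cover a point of `S₁` just right of
`p + s` and a point of `S₂` just left of `p + 2s + 3a/2`, which are `s + a` apart.
-/

open Set

lemma le_of_disjoint_Icc_Ioo {c d b e : ℝ} (hcd : c ≤ d) (hce : c < e) (hbe : b < e)
    (h : Disjoint (Icc c d) (Ioo b e)) : d ≤ b := by
  have hcb : c ≤ b := by
    by_contra! hbc
    exact h.ne_of_mem (left_mem_Icc.2 hcd) ⟨hbc, hce⟩ rfl
  have := Ioo_disjoint_Ioo.1 (h.mono_left Ioo_subset_Icc_self)
  rw [max_eq_right hcb, min_le_iff] at this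
  exact this.resolve_right hbe.not_ge

lemma le_add_of_covered_by_three_Icc {c γ : Fin 3 → ℝ} {s lo hi x y : ℝ} (hγ : ∀ j, γ j ≤ s)
    (hcov : ∀ z ∈ ({lo, x, y, hi} : Set ℝ), ∃ j, z ∈ Icc (c j) (c j + γ j))
    (hx : lo + s < x) (hx' : x < hi - s) (hy : lo + s < y) (hy' : y < hi - s) :
    y ≤ x + s := by
  obtain ⟨i, hi_lo, -⟩ := hcov lo (by simp)
  obtain ⟨k, -, hk_hi⟩ := hcov hi (by simp)
  obtain ⟨jx, hjx⟩ := hcov x (by simp)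
  obtain ⟨jy, hjy⟩ := hcov y (by simp)
  have hs : 0 ≤ s := by linarith [hjx.1, hjx.2, hγ jx]
  have hik : i ≠ k := by rintro rfl; linarith [hγ i]
  have hxi : jx ≠ i := by rintro rfl; linarith [hγ jx, hjx.2]
  have hxk : jx ≠ k := by rintro rfl; linarith [hγ jx, hjx.1]
  have hyi : jy ≠ i := by rintro rfl; linarith [hγ jy, hjy.2]
  have hyk : jy ≠ k := by rintro rfl; linarith [hγ jy, hjy.1]
  obtain rfl : jx = jy := by omega
  linarith [hγ jx, hjx.1, hjy.2]

lemma AddCircle.coe_sub_period {T : ℝ} (t : ℝ) : ((t - T : ℝ) : AddCircle T) = t := by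
  rw [AddCircle.coe_sub, AddCircle.coe_period, sub_zero]

section Arcs

variable {T : ℝ}

lemma carc_mono {u v u' v' : ℝ} (hu : u' ≤ u) (hv : v ≤ v') : carc T u v ⊆ carc T u' v' :=
  image_mono (Icc_subset_Icc hu hv)

lemma coe_mem_carc {u v t : ℝ} (ht : t ∈ Icc u v) : (t : AddCircle T) ∈ carc T u v :=
  mem_image_of_mem _ ht

lemma carc_add_eq_of_coe_eq {u u' : ℝ} (h : (u : AddCircle T) = u') (γ : ℝ) :
    carc T u (u + γ) = carc T u' (u' + γ) := by
  have hshift : ((u' - u : ℝ) : AddCircle T) = 0 := by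
    rw [AddCircle.coe_sub, h, sub_self]
  have hIcc : Icc u' (u' + γ) = (· + (u' - u)) '' Icc u (u + γ) := by
    rw [image_add_const_Icc]; congr 1 <;> ring
  simp only [carc, hIcc, image_image, AddCircle.coe_add, hshift, add_zero]

variable [Fact (0 < T)]

lemma exists_carc_eq_of_disjoint_oarc {u g α γ : ℝ} (hg : 0 < g) (hγ : 0 ≤ γ)
    (h : Disjoint (oarc T u (u + g)) (carc T α (α + γ))) :
    ∃ c, carc T α (α + γ) = carc T c (c + γ) ∧ u + g ≤ c ∧ c + γ ≤ u + T := by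
  obtain ⟨c, hc, hcα⟩ : (α : AddCircle T) ∈ ((↑) : ℝ → AddCircle T) '' Ico (u + g) (u + g + T) := by
    rw [AddCircle.coe_image_Ico_eq]; trivial
  rw [carc_add_eq_of_coe_eq hcα.symm] at h ⊢
  refine ⟨c, rfl, hc.1, le_of_disjoint_Icc_Ioo (e := u + T + g) (by linarith) (by linarith [hc.2])
    (by linarith) (Set.disjoint_right.2 fun t ht hct ↦ ?_)⟩
  exact Set.disjoint_left.1 h
    ⟨t - T, ⟨by linarith [ht.1], by linarith [ht.2]⟩, AddCircle.coe_sub_period t⟩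
    (coe_mem_carc hct)

lemma mem_Icc_of_coe_mem_carc {p c d x : ℝ} (hc : p ≤ c) (hd : d < p + T)
    (hx : x ∈ Ico p (p + T)) (h : (x : AddCircle T) ∈ carc T c d) : x ∈ Icc c d := by
  obtain ⟨t, ht, htx⟩ := h
  rwa [(AddCircle.coe_eq_coe_iff_of_mem_Ico ⟨hc.trans ht.1, ht.2.trans_lt hd⟩ hx).1 htx] at ht

end Arcs

/-- Proposition 2: there is an OPG instance where every optimal cover
contains the unique largest gap.  On the circle of circumference `T = 3s + 3a`, place
segments `S₁ = [0,s]`, `S₂ = [s+a, 2s+a]`, `S₃ = [2s+2a, 2s+2a+s₃]`,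
`S₄ = [3s+2a−s₄, 3s+2a]` with gaps `G₁, G₂, G₄` of length `a` and the largest gap
`G₃ = (2s+2a+s₃, 2s+2a+s₃+3a/2)` of length `3a/2` (so `s₃ + s₄ = s − 3a/2`, making
the segments "evenly spaced": `len S₁ = len S₂ = len (S₃ ∪ G₃ ∪ S₄) = s`).
With `n = 3` robots: (i) there is a cover with every arc of length at most `s`
(namely `{S₁, S₂, S₃ ∪ G₃ ∪ S₄}`, which covers `G₃`), and (ii) every cover by
3 arcs that skips `G₃` (each arc disjoint from the open gap `G₃`) has some arc
of length strictly greater than `s = len S₁`. -/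
theorem largest_gap_not_always_skipped (s a s3 s4 : ℝ)
    (ha : 0 < a) (hs3 : 0 < s3) (hs4 : 0 < s4) (hsum : s3 + s4 = s - 3 * a / 2) :
    (∃ α γ : Fin 3 → ℝ, (∀ j, 0 ≤ γ j ∧ γ j ≤ s) ∧
      (carc (3*s + 3*a) 0 s ∪ carc (3*s + 3*a) (s + a) (2*s + a) ∪
        carc (3*s + 3*a) (2*s + 2*a) (2*s + 2*a + s3) ∪
        carc (3*s + 3*a) (3*s + 2*a - s4) (3*s + 2*a)) ⊆
          ⋃ j, carc (3*s + 3*a) (α j) (α j + γ j)) ∧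
    (∀ α γ : Fin 3 → ℝ, (∀ j, 0 ≤ γ j) →
      (carc (3*s + 3*a) 0 s ∪ carc (3*s + 3*a) (s + a) (2*s + a) ∪
        carc (3*s + 3*a) (2*s + 2*a) (2*s + 2*a + s3) ∪
        carc (3*s + 3*a) (3*s + 2*a - s4) (3*s + 2*a)) ⊆
          ⋃ j, carc (3*s + 3*a) (α j) (α j + γ j) →
      (∀ j, Disjoint (oarc (3*s + 3*a) (2*s + 2*a + s3) (2*s + 2*a + s3 + 3*a/2))
          (carc (3*s + 3*a) (α j) (α j + γ j))) →
      ∃ j, s < γ j) := by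
  refine ⟨⟨![0, s + a, 2*s + 2*a], ![s, s, s], fun j ↦ ?_, ?_⟩, ?_⟩
  · fin_cases j <;> simp <;> linarith
  · refine union_subset (union_subset (union_subset ?_ ?_) ?_) ?_
    · exact subset_iUnion_of_subset 0 (carc_mono (by simp) (by simp))
    · exact subset_iUnion_of_subset 1 (carc_mono (by simp) (by simp; linarith))
    · exact subset_iUnion_of_subset 2 (carc_mono (by simp) (by simp; linarith))
    · exact subset_iUnion_of_subset 2 (carc_mono (by simp; linarith) (by simp; linarith))
  intro α γ hγ hcov hdisj
  by_contra! hγs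
  have : Fact (0 < 3*s + 3*a) := ⟨by linarith⟩
  choose c hc_arc hc_lo hc_hi using fun j ↦
    exists_carc_eq_of_disjoint_oarc (by linarith : (0 : ℝ) < 3*a/2) (hγ j) (hdisj j)
  have hline : ∀ z, 2*s + 2*a + s3 + 3*a/2 ≤ z → z ≤ 2*s + 2*a + s3 + (3*s + 3*a) →
      (z : AddCircle (3*s + 3*a)) ∈ ⋃ j, carc (3*s + 3*a) (α j) (α j + γ j) →
      ∃ j, z ∈ Icc (c j) (c j + γ j) := by
    intro z hz₁ hz₂ hz
    obtain ⟨j, hj⟩ := mem_iUnion.1 hz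
    rw [hc_arc j] at hj
    exact ⟨j, mem_Icc_of_coe_mem_carc (hc_lo j) (by linarith [hc_hi j]) ⟨hz₁, by linarith⟩ hj⟩
  have hcov_line : ∀ z ∈ ({2*s + 2*a + s3 + 3*a/2, 3*s + 2*a + s3 + 7*a/4,
      4*s + 5*a + s3 - a/4, 5*s + 5*a + s3} : Set ℝ), ∃ j, z ∈ Icc (c j) (c j + γ j) := by
    -- `p ∈ S₄`; the other three points lie in `S₁`, `S₂`, `S₃` shifted up by one period
    rintro z (rfl | rfl | rfl | rfl)
    · exact hline _ le_rfl (by linarith) (hcov (Or.inr (coe_mem_carc ⟨by linarith, by linarith⟩)))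
    · exact hline _ (by linarith) (by linarith) (hcov (Or.inl (Or.inl (Or.inl
        ⟨_, ⟨by linarith, by linarith⟩, AddCircle.coe_sub_period _⟩))))
    · exact hline _ (by linarith) (by linarith) (hcov (Or.inl (Or.inl (Or.inr
        ⟨_, ⟨by linarith, by linarith⟩, AddCircle.coe_sub_period _⟩))))
    · exact hline _ (by linarith) (by linarith) (hcov (Or.inl (Or.inr
        ⟨_, ⟨by linarith, by linarith⟩, AddCircle.coe_sub_period _⟩)))
  linarith [le_add_of_covered_by_three_Icc hγs hcov_line (by linarith) (by linarith) (by linarith)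
    (by linarith)]
end

section
/- In any optimal cover of a perimeter P that is a proper subset of the circle ∂R, some covering arc has its right endpoint coinciding with the right endpoint of some segment of P, and some covering arc has its left endpoint coinciding with the left endpoint of some segment of P. -/
/-!
A nonempty gap exists because `P ≠ ∂R`; if it has length `γ > 0`, the arc complementary to it
contains `P` and splits into `n` arcs of length `(T - γ) / n`, so `ℓ* ≤ (T - γ) / n`. Arcs of
total length at most `T - γ < T` cannot cover the circle, so some nonempty gap is not contained
in any `C_j`, hence by the normalization is disjoint from all of them. The arc covering the right
end of the segment before that gap must end exactly there, since otherwise it would enter the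
gap; symmetrically, the arc covering the left end of the segment after it starts there.
-/

open Set MeasureTheory

section Arcs

variable {T : ℝ}

lemma carc_subset_closedBall (a b : ℝ) :
    carc T a b ⊆ Metric.closedBall (((a + b) / 2 : ℝ) : AddCircle T) ((b - a) / 2) := by
  rintro _ ⟨x, ⟨hax, hxb⟩, rfl⟩
  rw [Metric.mem_closedBall, dist_eq_norm, ← AddCircle.coe_sub]
  refine QuotientAddGroup.norm_mk_le_norm.trans ?_
  rw [Real.norm_eq_abs, abs_le]
  constructor <;> linarith

lemma volume_carc_le [Fact (0 < T)] (a b : ℝ) :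
    volume (carc T a b) ≤ ENNReal.ofReal (b - a) :=
  calc volume (carc T a b) ≤ _ := measure_mono (carc_subset_closedBall a b)
    _ = ENNReal.ofReal (min T (b - a)) := by rw [AddCircle.volume_closedBall]; ring_nf
    _ ≤ ENNReal.ofReal (b - a) := ENNReal.ofReal_le_ofReal (min_le_right _ _)

lemma le_sum_of_univ_subset_iUnion_carc (hT : 0 < T) {ι : Type*} [Fintype ι] (a c : ι → ℝ)
    (hc : ∀ i, 0 ≤ c i) (hcov : univ ⊆ ⋃ i, carc T (a i) (a i + c i)) :
    T ≤ ∑ i, c i := by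
  have : Fact (0 < T) := ⟨hT⟩
  rw [← ENNReal.ofReal_le_ofReal_iff (Finset.sum_nonneg fun i _ => hc i),
    ENNReal.ofReal_sum_of_nonneg fun i _ => hc i, ← AddCircle.measure_univ T]
  calc volume (univ : Set (AddCircle T)) ≤ volume (⋃ i, carc T (a i) (a i + c i)) :=
        measure_mono hcov
    _ ≤ ∑ i, volume (carc T (a i) (a i + c i)) := measure_iUnion_fintype_le _ _
    _ ≤ ∑ i, ENNReal.ofReal (c i) := Finset.sum_le_sum fun i _ => by
        simpa using volume_carc_le (a i) (a i + c i)

lemma exists_mem_Icc_add_mul (W s : ℝ) (n : ℕ) {x : ℝ} (hx : x ∈ Icc W (W + (n + 1) * s)) :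
    ∃ j : Fin (n + 1), x ∈ Icc (W + j * s) (W + j * s + s) := by
  induction n with
  | zero => exact ⟨0, by simpa using hx⟩
  | succ n ih =>
    rcases le_or_gt x (W + (n + 1) * s) with hle | hlt
    · obtain ⟨j, hj⟩ := ih ⟨hx.1, hle⟩
      exact ⟨j.castSucc, by simpa using hj⟩
    · refine ⟨Fin.last (n + 1), ?_, ?_⟩ <;> push_cast at hx ⊢ <;> linarith [hx.2]

lemma carc_subset_iUnion_carc (W s : ℝ) {n : ℕ} (hn : 0 < n) :
    carc T W (W + n * s) ⊆ ⋃ j : Fin n, carc T (W + j * s) (W + j * s + s) := by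
  obtain ⟨m, rfl⟩ := Nat.exists_eq_add_one_of_ne_zero hn.ne'
  rintro _ ⟨x, hx, rfl⟩
  obtain ⟨j, hj⟩ := exists_mem_Icc_add_mul W s m (by simpa using hx)
  exact mem_iUnion.2 ⟨j, x, hj, rfl⟩

lemma coe_eq_right_of_disjoint_oarc {v w a b : ℝ} (hvw : v < w)
    (hdis : Disjoint (oarc T v w) (carc T a b)) (hv : (v : AddCircle T) ∈ carc T a b) :
    (b : AddCircle T) = v := by
  obtain ⟨t, ⟨hat, htb⟩, htv : (t : AddCircle T) = v⟩ := hv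
  obtain rfl | htb := htb.eq_or_lt
  · exact htv
  set x := min b (t + (w - v) / 2)
  have hxt : t < x := lt_min htb (by linarith)
  have hxC : (x : AddCircle T) ∈ carc T a b := ⟨x, ⟨by linarith, min_le_left _ _⟩, rfl⟩
  have hxG : (x : AddCircle T) ∈ oarc T v w := by
    refine ⟨v + (x - t), ⟨by linarith, by linarith [min_le_right b (t + (w - v) / 2)]⟩, ?_⟩
    show ((v + (x - t) : ℝ) : AddCircle T) = x
    rw [AddCircle.coe_add, ← htv, ← AddCircle.coe_add, add_sub_cancel]
  exact disjoint_left.1 hdis hxG hxC |>.elim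

lemma coe_eq_left_of_disjoint_oarc {v w a b : ℝ} (hvw : v < w)
    (hdis : Disjoint (oarc T v w) (carc T a b)) (hw : (w : AddCircle T) ∈ carc T a b) :
    (a : AddCircle T) = w := by
  obtain ⟨t, ⟨hat, htb⟩, htw : (t : AddCircle T) = w⟩ := hw
  obtain rfl | hat := hat.eq_or_lt
  · exact htw
  set x := max a (t - (w - v) / 2)
  have hxt : x < t := max_lt hat (by linarith)
  have hxC : (x : AddCircle T) ∈ carc T a b := ⟨x, ⟨le_max_left _ _, by linarith⟩, rfl⟩
  have hxG : (x : AddCircle T) ∈ oarc T v w := by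
    refine ⟨w + (x - t), ⟨by linarith [le_max_right a (t - (w - v) / 2)], by linarith⟩, ?_⟩
    show ((w + (x - t) : ℝ) : AddCircle T) = x
    rw [AddCircle.coe_add, ← htw, ← AddCircle.coe_add, add_sub_cancel]
  exact disjoint_left.1 hdis hxG hxC |>.elim

lemma exists_coe_eq_of_mem_iUnion_carc_zero {ι : Type*} {a c : ι → ℝ} (hc : ∀ i, c i = 0)
    {p : AddCircle T} (hp : p ∈ ⋃ i, carc T (a i) (a i + c i)) : ∃ i, (a i : AddCircle T) = p := by
  obtain ⟨i, t, ⟨hat, hta⟩, rfl⟩ := mem_iUnion.1 hp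
  rw [hc, add_zero] at hta
  exact ⟨i, by rw [le_antisymm hta hat]⟩

end Arcs

/-- The optimal length `ℓ*` of a cover of `P` by `n` arcs. -/
noncomputable def coverLength (T : ℝ) (n : ℕ) (P : Set (AddCircle T)) : ℝ :=
  sInf {ℓ : ℝ | ∃ a' c' : Fin n → ℝ, (∀ j', 0 ≤ c' j' ∧ c' j' ≤ ℓ) ∧
    P ⊆ ⋃ j', carc T (a' j') (a' j' + c' j')}

lemma coverLength_le_div {T : ℝ} {n : ℕ} (hn : 0 < n) {P : Set (AddCircle T)} {W L : ℝ}
    (hL : 0 ≤ L) (hP : P ⊆ carc T W (W + L)) : coverLength T n P ≤ L / n := by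
  refine csInf_le ⟨0, fun ℓ ⟨_, c', hc', _⟩ => (hc' ⟨0, hn⟩).1.trans (hc' ⟨0, hn⟩).2⟩
    ⟨fun j => W + j * (L / n), fun _ => L / n, fun _ => ⟨by positivity, le_rfl⟩, ?_⟩
  rw [← mul_div_cancel₀ L (Nat.cast_ne_zero.2 hn.ne')] at hP
  exact hP.trans (carc_subset_iUnion_carc W _ hn)

lemma monotone_of_forall_le_succ {α : Type*} [Preorder α] {q : ℕ} {f : Fin q → α}
    (h : ∀ k : Fin q, ∀ hk : k.1 + 1 < q, f k ≤ f ⟨k.1 + 1, hk⟩) : Monotone f := by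
  cases q with
  | zero => exact fun i => i.elim0
  | succ m => exact Fin.monotone_iff_le_succ.2 fun i => h i.castSucc (by simp)

section Segments

variable {q : ℕ} (hq : 0 < q)

/-- The right end of the gap `G_k` following the segment `S_k = [u k, v k]`. -/
def gapEnd (T : ℝ) (u : Fin q → ℝ) (k : Fin q) : ℝ :=
  if h : k.1 + 1 < q then u ⟨k.1 + 1, h⟩ else u ⟨0, hq⟩ + T

variable {T : ℝ} {u v : Fin q → ℝ}

lemma exists_coe_gapEnd_eq (k : Fin q) : ∃ i, (gapEnd hq T u k : AddCircle T) = u i := by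
  unfold gapEnd
  split_ifs
  · exact ⟨_, rfl⟩
  · exact ⟨_, AddCircle.coe_add_period T _⟩

lemma gapEnd_le (huv : ∀ k, u k ≤ v k) (hwin : ∀ k, v k ≤ u ⟨0, hq⟩ + T) (k : Fin q) :
    gapEnd hq T u k ≤ u ⟨0, hq⟩ + T := by
  unfold gapEnd
  split_ifs
  · exact (huv _).trans (hwin _)
  · exact le_rfl

lemma gapEnd_le_add (hu : Monotone u) (huv : ∀ k, u k ≤ v k)
    (hwin : ∀ k, v k ≤ u ⟨0, hq⟩ + T) (k : Fin q) : gapEnd hq T u k ≤ v k + T := by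
  have : u ⟨0, hq⟩ ≤ u k := hu (Nat.zero_le _)
  linarith [gapEnd_le hq huv hwin k, huv k]

lemma iUnion_carc_subset_carc_add (hu : Monotone u) (hwin : ∀ k, v k ≤ u ⟨0, hq⟩ + T) :
    ⋃ i, carc T (u i) (v i) ⊆ carc T (u ⟨0, hq⟩) (u ⟨0, hq⟩ + T) :=
  iUnion_subset fun i => image_mono (Icc_subset_Icc (hu (Nat.zero_le _)) (hwin i))

lemma iUnion_carc_subset_carc_gapEnd (hu : Monotone u) (hv : Monotone v)
    (huv : ∀ k, u k ≤ v k) (hwin : ∀ k, v k ≤ u ⟨0, hq⟩ + T) (k : Fin q) :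
    ⋃ i, carc T (u i) (v i) ⊆ carc T (gapEnd hq T u k) (v k + T) := by
  refine iUnion_subset fun i => ?_
  have h0i : u ⟨0, hq⟩ ≤ u i := hu (Nat.zero_le _)
  have h0k : u ⟨0, hq⟩ ≤ u k := hu (Nat.zero_le _)
  rcases le_or_gt i k with hik | hki
  · rintro _ ⟨x, hx, rfl⟩
    refine ⟨x + T, ⟨?_, ?_⟩, AddCircle.coe_add_period T x⟩
    · linarith [gapEnd_le hq huv hwin k, hx.1]
    · linarith [hv hik, hx.2]
  · have hk : k.1 + 1 < q := lt_of_le_of_lt hki i.2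
    refine image_mono (Icc_subset_Icc ?_ ?_)
    · rw [gapEnd, dif_pos hk]
      exact hu (Nat.succ_le_of_lt hki)
    · linarith [hwin i, huv k]

lemma exists_mem_Icc_or_mem_Ioo_gapEnd {x : ℝ} (hx : x ∈ Ico (u ⟨0, hq⟩) (u ⟨0, hq⟩ + T)) :
    (∃ k, x ∈ Icc (u k) (v k)) ∨ ∃ k, x ∈ Ioo (v k) (gapEnd hq T u k) := by
  obtain ⟨k, hk, hmax⟩ := Finset.exists_max_image (Finset.univ.filter fun k => u k ≤ x) id
    ⟨⟨0, hq⟩, by simpa using hx.1⟩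
  simp only [Finset.mem_filter, Finset.mem_univ, true_and, id] at hk hmax
  rcases le_or_gt x (v k) with hxv | hvx
  · exact Or.inl ⟨k, hk, hxv⟩
  refine Or.inr ⟨k, hvx, ?_⟩
  unfold gapEnd
  split_ifs with h
  · exact lt_of_not_ge fun hux => (hmax _ hux).not_gt (Nat.lt_succ_self _)
  · exact hx.2

lemma mem_iUnion_carc_or_mem_oarc_gapEnd (hT : 0 < T) (z : AddCircle T) :
    z ∈ ⋃ k, carc T (u k) (v k) ∨ ∃ k, z ∈ oarc T (v k) (gapEnd hq T u k) := by
  have : Fact (0 < T) := ⟨hT⟩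
  have hxz : ((AddCircle.equivIco T (u ⟨0, hq⟩) z : ℝ) : AddCircle T) = z :=
    AddCircle.coe_equivIco
  rcases exists_mem_Icc_or_mem_Ioo_gapEnd hq (AddCircle.equivIco T (u ⟨0, hq⟩) z).2 with
    ⟨k, hk⟩ | ⟨k, hk⟩
  · exact Or.inl (mem_iUnion.2 ⟨k, _, hk, hxz⟩)
  · exact Or.inr ⟨k, _, hk, hxz⟩

lemma exists_lt_gapEnd (hT : 0 < T) (hP : ⋃ k, carc T (u k) (v k) ≠ univ) :
    ∃ k, v k < gapEnd hq T u k := by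
  obtain ⟨z, hz⟩ := (ne_univ_iff_exists_notMem _).1 hP
  obtain hzP | ⟨k, _, ⟨hvx, hxw⟩, _⟩ := mem_iUnion_carc_or_mem_oarc_gapEnd hq hT z
  · exact absurd hzP hz
  · exact ⟨k, hvx.trans hxw⟩

lemma univ_subset_iUnion_of_oarc_gapEnd_subset {ι : Type*} {C : ι → Set (AddCircle T)}
    (hT : 0 < T) (hcov : ⋃ k, carc T (u k) (v k) ⊆ ⋃ j, C j)
    (hgap : ∀ k, v k < gapEnd hq T u k → ∃ j, oarc T (v k) (gapEnd hq T u k) ⊆ C j) :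
    univ ⊆ ⋃ j, C j := fun z _ => by
  obtain hzP | ⟨k, hz⟩ := mem_iUnion_carc_or_mem_oarc_gapEnd hq hT z
  · exact hcov hzP
  obtain ⟨j, hj⟩ := hgap k (by obtain ⟨x, hx, _⟩ := hz; exact hx.1.trans hx.2)
  exact mem_iUnion.2 ⟨j, hj hz⟩

lemma exists_coe_endpoints_eq_of_disjoint_gap {ι : Type*} {a c : ι → ℝ}
    (huv : ∀ k, u k ≤ v k) (hcov : ⋃ k, carc T (u k) (v k) ⊆ ⋃ j, carc T (a j) (a j + c j))
    {k : Fin q} (hk : v k < gapEnd hq T u k)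
    (hdis : ∀ j, Disjoint (oarc T (v k) (gapEnd hq T u k)) (carc T (a j) (a j + c j))) :
    (∃ j k, ((a j + c j : ℝ) : AddCircle T) = v k) ∧ ∃ j k, (a j : AddCircle T) = u k := by
  obtain ⟨j, hj⟩ := mem_iUnion.1 (hcov (mem_iUnion.2 ⟨k, v k, ⟨huv k, le_rfl⟩, rfl⟩))
  obtain ⟨i, hi⟩ := exists_coe_gapEnd_eq hq (T := T) (u := u) k
  obtain ⟨j', hj'⟩ := mem_iUnion.1 (hcov (mem_iUnion.2 ⟨i, u i, ⟨le_rfl, huv i⟩, hi.symm⟩))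
  exact ⟨⟨j, k, coe_eq_right_of_disjoint_oarc hk (hdis j) hj⟩,
    ⟨j', i, (coe_eq_left_of_disjoint_oarc hk (hdis j') hj').trans hi⟩⟩

lemma exists_gap_disjoint_of_le_coverLength {n : ℕ} (hn : 0 < n) (hT : 0 < T)
    (hu : Monotone u) (hv : Monotone v) (huv : ∀ k, u k ≤ v k)
    (hwin : ∀ k, v k ≤ u ⟨0, hq⟩ + T) (hP : ⋃ k, carc T (u k) (v k) ≠ univ) {a c : Fin n → ℝ}
    (hc : ∀ j, 0 ≤ c j ∧ c j ≤ coverLength T n (⋃ k, carc T (u k) (v k)))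
    (hcov : ⋃ k, carc T (u k) (v k) ⊆ ⋃ j, carc T (a j) (a j + c j))
    (hnorm : ∀ k j, oarc T (v k) (gapEnd hq T u k) ⊆ carc T (a j) (a j + c j) ∨
      Disjoint (oarc T (v k) (gapEnd hq T u k)) (carc T (a j) (a j + c j))) :
    ∃ k, v k < gapEnd hq T u k ∧
      ∀ j, Disjoint (oarc T (v k) (gapEnd hq T u k)) (carc T (a j) (a j + c j)) := by
  by_contra! hmeet
  have hcover := univ_subset_iUnion_of_oarc_gapEnd_subset hq hT hcov fun k hk =>
    (hmeet k hk).imp fun j hj => (hnorm k j).resolve_right hj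
  have hT_le : T ≤ n * coverLength T n (⋃ k, carc T (u k) (v k)) := by
    simpa using (le_sum_of_univ_subset_iUnion_carc hT a c (fun j => (hc j).1) hcover).trans
      (Finset.sum_le_card_nsmul _ _ _ fun j _ => (hc j).2)
  obtain ⟨k₀, hk₀⟩ := exists_lt_gapEnd hq hT hP
  have hℓ : coverLength T n (⋃ k, carc T (u k) (v k)) ≤ (v k₀ + T - gapEnd hq T u k₀) / n :=
    coverLength_le_div hn (sub_nonneg.2 (gapEnd_le_add hq hu huv hwin k₀)) (by
      rw [add_sub_cancel]
      exact iUnion_carc_subset_carc_gapEnd hq hu hv huv hwin k₀)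
  rw [le_div_iff₀' (by positivity)] at hℓ
  linarith

end Segments

/-- Proposition 3: let `P = S₁ ∪ ... ∪ S_q ⊊ ∂R` be a perimeter on a
circle of circumference `T` with segments `S_k = [u k, v k]` and gaps following them.
In any optimal, gap-normalized cover `{C_j}` (each arc `C_j = [a j, a j + c j]` has
length at most `ℓ* = sInf {feasible ℓ}`, covers `P`, and each gap is either contained
in or disjoint from each `C_j`), some arc's right endpoint coincides with the right
endpoint of some segment, and some arc's left endpoint coincides with the left
endpoint of some segment. -/
theorem endpoint_alignment (T : ℝ) (q n : ℕ) (hq : 0 < q) (hn : 0 < n)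
    (u v : Fin q → ℝ)
    (huv : ∀ k, u k ≤ v k)
    (hsep : ∀ k : Fin q, ∀ h : k.1 + 1 < q, v k ≤ u ⟨k.1 + 1, h⟩)
    (h0 : 0 ≤ u ⟨0, hq⟩)
    (hT : v ⟨q - 1, Nat.sub_lt hq one_pos⟩ ≤ T)
    (hproper : (⋃ k, carc T (u k) (v k)) ≠ Set.univ)
    (a c : Fin n → ℝ)
    (hopt : ∀ j, 0 ≤ c j ∧ c j ≤ sInf {ℓ : ℝ | ∃ a' c' : Fin n → ℝ,
        (∀ j', 0 ≤ c' j' ∧ c' j' ≤ ℓ) ∧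
        (⋃ k, carc T (u k) (v k)) ⊆ ⋃ j', carc T (a' j') (a' j' + c' j')})
    (hcov : (⋃ k, carc T (u k) (v k)) ⊆ ⋃ j, carc T (a j) (a j + c j))
    (hnorm : ∀ k : Fin q, ∀ j,
        oarc T (v k) (if h : k.1 + 1 < q then u ⟨k.1 + 1, h⟩ else u ⟨0, hq⟩ + T)
          ⊆ carc T (a j) (a j + c j) ∨
        Disjoint
          (oarc T (v k) (if h : k.1 + 1 < q then u ⟨k.1 + 1, h⟩ else u ⟨0, hq⟩ + T))
          (carc T (a j) (a j + c j))) :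
    (∃ j k, ((a j + c j : ℝ) : AddCircle T) = ((v k : ℝ) : AddCircle T)) ∧
    (∃ j k, ((a j : ℝ) : AddCircle T) = ((u k : ℝ) : AddCircle T)) := by
  have hopt' : ∀ j, 0 ≤ c j ∧ c j ≤ coverLength T n (⋃ k, carc T (u k) (v k)) := hopt
  have hu : Monotone u := monotone_of_forall_le_succ fun k hk => (huv k).trans (hsep k hk)
  have hv : Monotone v := monotone_of_forall_le_succ fun k hk => (hsep k hk).trans (huv _)
  have hwin : ∀ k, v k ≤ u ⟨0, hq⟩ + T := fun k => by
    have hk : k ≤ ⟨q - 1, Nat.sub_lt hq one_pos⟩ := Nat.le_sub_one_of_lt k.2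
    linarith [hv hk]
  rcases (show 0 ≤ T by linarith [hwin ⟨0, hq⟩, huv ⟨0, hq⟩]).eq_or_lt with rfl | hTpos
  -- period `0`: the circle is `ℝ`, `P` is a single point and every arc has length `0`
  · have hc : ∀ j, c j = 0 := fun j => le_antisymm (by
      simpa using (hopt' j).2.trans (coverLength_le_div hn le_rfl
        (iUnion_carc_subset_carc_add hq hu hwin))) (hopt' j).1
    obtain ⟨j, hj⟩ := exists_coe_eq_of_mem_iUnion_carc_zero hc
      (hcov (mem_iUnion.2 ⟨⟨0, hq⟩, _, ⟨le_rfl, huv _⟩, rfl⟩))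
    have : u ⟨0, hq⟩ = v ⟨0, hq⟩ := le_antisymm (huv _) (by simpa using hwin ⟨0, hq⟩)
    exact ⟨⟨j, ⟨0, hq⟩, by rw [hc, add_zero, hj, this]⟩, ⟨j, ⟨0, hq⟩, hj⟩⟩
  obtain ⟨k, hk, hdis⟩ :=
    exists_gap_disjoint_of_le_coverLength hq hn hTpos hu hv huv hwin hproper hopt' hcov hnorm
  exact exists_coe_endpoints_eq_of_disjoint_gap hq huv hcov hk hdis
end

section
/- As a consequence of the structure theorem, the optimal value ℓ* for a single multi-component perimeter equals len(S_{k−k'})/t for some indices 1 ≤ k, k' ≤ q and some integer 1 ≤ t ≤ n, where S_{k−k'} denotes the closed arc from the left endpoint of S_k clockwise to the right endpoint of S_{k'} (including intermediate gaps). -/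
/-!
A feasible cover can always be traded for one whose longest arc is a candidate and no longer.
If the arcs have total length at least `T`, `n ℓ ≥ T` and `n` equal arcs covering the hull
`S_{k₀−k₁}` of `P` will do. Otherwise some point of the circle is missed, and cutting there
turns the problem into covering finitely many intervals of a line. There the cover splits
greedily into blocks: from the leftmost remaining interval, the longest hole-free stretch,
together with the `t` arcs starting in it, which cannot reach past the hole. A block of length
`L` gives `L ≤ t ℓ`, and replacing its arcs by `t` equal arcs of length `L / t` yields a cover
whose longest arc is the largest such ratio, a candidate. The candidate set being finite, the
infimum is its least feasible element.
-/

open Set Finset MeasureTheory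

theorem exists_csInf_eq_of_finite {α β : Type*} [ConditionallyCompleteLinearOrder α] {S : Set α}
    {B : Set β} (f : β → α) (hB : B.Finite) (hS : S.Nonempty)
    (h : ∀ x ∈ S, ∃ b ∈ B, f b ∈ S ∧ f b ≤ x) : ∃ b ∈ B, sInf S = f b := by
  obtain ⟨x, hx⟩ := hS
  obtain ⟨b, hb, hbS, -⟩ := h x hx
  obtain ⟨b₀, ⟨hb₀, hb₀S⟩, hmin⟩ :=
    exists_min_image {b ∈ B | f b ∈ S} f (hB.subset (sep_subset _ _)) ⟨b, hb, hbS⟩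
  refine ⟨b₀, hb₀, IsLeast.csInf_eq ⟨hb₀S, fun y hy => ?_⟩⟩
  obtain ⟨b', hb', hb'S, hle⟩ := h y hy
  exact (hmin b' ⟨hb', hb'S⟩).trans hle

theorem Fin.monotone_of_interlaced {α : Type*} [Preorder α] {q : ℕ} {u v : Fin q → α}
    (huv : ∀ k, u k ≤ v k) (hsep : ∀ k : Fin q, ∀ h : k.1 + 1 < q, v k ≤ u ⟨k.1 + 1, h⟩) :
    Monotone u ∧ Monotone v := by
  cases q with
  | zero => exact ⟨fun i => i.elim0, fun i => i.elim0⟩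
  | succ p =>
    rw [Fin.monotone_iff_le_succ, Fin.monotone_iff_le_succ]
    exact ⟨fun i => (huv _).trans (hsep i.castSucc (by simp)),
      fun i => (hsep i.castSucc (by simp)).trans (huv _)⟩

def IccCoverable (X : Set ℝ) (m : ℕ) (ℓ : ℝ) : Prop :=
  ∃ a c : Fin m → ℝ, (∀ j, 0 ≤ c j ∧ c j ≤ ℓ) ∧ X ⊆ ⋃ j, Icc (a j) (a j + c j)

namespace IccCoverable

variable {X Y : Set ℝ} {m k : ℕ} {ℓ ℓ' : ℝ}

theorem mono_set (h : IccCoverable X m ℓ) (hYX : Y ⊆ X) : IccCoverable Y m ℓ :=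
  let ⟨a, c, hc, hX⟩ := h
  ⟨a, c, hc, hYX.trans hX⟩

theorem mono (h : IccCoverable X m ℓ) (hℓ : ℓ ≤ ℓ') : IccCoverable X m ℓ' :=
  let ⟨a, c, hc, hX⟩ := h
  ⟨a, c, fun j => ⟨(hc j).1, (hc j).2.trans hℓ⟩, hX⟩

theorem empty (hℓ : 0 ≤ ℓ) : IccCoverable ∅ m ℓ :=
  ⟨0, 0, fun _ => ⟨le_rfl, hℓ⟩, empty_subset _⟩

theorem union (hX : IccCoverable X m ℓ) (hY : IccCoverable Y k ℓ) :
    IccCoverable (X ∪ Y) (m + k) ℓ := by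
  obtain ⟨a, c, hc, hXa⟩ := hX
  obtain ⟨b, d, hd, hYb⟩ := hY
  refine ⟨Fin.append a b, Fin.append c d, Fin.addCases (by simpa using hc) (by simpa using hd),
    union_subset (hXa.trans ?_) (hYb.trans ?_)⟩
  · exact iUnion_subset fun j => subset_iUnion_of_subset (Fin.castAdd k j) (by simp)
  · exact iUnion_subset fun j => subset_iUnion_of_subset (Fin.natAdd m j) (by simp)

theorem Icc_add (hℓ : 0 ≤ ℓ) (a : ℝ) : IccCoverable (Icc a (a + ℓ)) 1 ℓ :=
  ⟨fun _ => a, fun _ => ℓ, fun _ => ⟨hℓ, le_rfl⟩, subset_iUnion_of_subset 0 le_rfl⟩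

theorem Icc_add_mul {δ : ℝ} (hδ : 0 ≤ δ) (a : ℝ) {t : ℕ} (ht : 0 < t) :
    IccCoverable (Icc a (a + t * δ)) t δ := by
  induction t, ht using Nat.le_induction generalizing a with
  | base => simpa using Icc_add hδ a
  | succ t _ ih =>
    rw [add_comm t 1]
    refine ((Icc_add hδ a).union (ih (a + δ))).mono_set fun x hx => ?_
    rcases le_total x (a + δ) with h | h
    · exact Or.inl ⟨hx.1, h⟩
    · exact Or.inr ⟨h, by push_cast at hx; linarith [hx.2]⟩

theorem Icc_div {a b : ℝ} (hab : a ≤ b) {t : ℕ} (ht : 0 < t) :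
    IccCoverable (Icc a b) t ((b - a) / t) := by
  have hδ : 0 ≤ (b - a) / t := div_nonneg (sub_nonneg.2 hab) t.cast_nonneg
  convert Icc_add_mul hδ a ht using 2
  field_simp
  ring

end IccCoverable

section Line

variable {ι κ : Type*} {A C : κ → ℝ} {ℓ : ℝ}

theorem sub_le_card_mul_of_Icc_subset {a b : ℝ} {J : Finset κ} (hab : a ≤ b)
    (hC : ∀ j ∈ J, C j ≤ ℓ) (hcov : Icc a b ⊆ ⋃ j ∈ J, Icc (A j) (A j + C j)) :
    b - a ≤ #J * ℓ := by
  obtain ⟨j, hj, hja⟩ := mem_iUnion₂.1 (hcov ⟨le_rfl, hab⟩)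
  have hℓ : 0 ≤ ℓ := (by linarith [hja.1, hja.2] : 0 ≤ C j).trans (hC j hj)
  have hvol := (measure_mono (μ := volume) hcov).trans (measure_biUnion_finset_le J _)
  simp only [Real.volume_Icc, add_sub_cancel_left] at hvol
  rw [← ENNReal.ofReal_le_ofReal_iff (by positivity)]
  calc ENNReal.ofReal (b - a) ≤ ∑ j ∈ J, ENNReal.ofReal (C j) := hvol
    _ ≤ ∑ _j ∈ J, ENNReal.ofReal ℓ := sum_le_sum fun j hj => ENNReal.ofReal_le_ofReal (hC j hj)
    _ = ENNReal.ofReal (#J * ℓ) := by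
      rw [sum_const, nsmul_eq_mul, ENNReal.ofReal_mul (Nat.cast_nonneg _), ENNReal.ofReal_natCast]

variable [DecidableEq κ] {P R : ι → ℝ}

/-- `s` is the leftmost interval and `e` maximises `R` among the intervals `i` with `[P s, R i]`
covered; every other interval is separated from `[P s, R e]` by a hole, which the arcs starting
left of `R e` cannot jump. -/
theorem exists_first_block {I : Finset ι} (hI : I.Nonempty) (hPR : ∀ i ∈ I, P i ≤ R i)
    {J : Finset κ} (hcov : ∀ i ∈ I, Icc (P i) (R i) ⊆ ⋃ j ∈ J, Icc (A j) (A j + C j)) :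
    ∃ s ∈ I, ∃ e ∈ I, P s ≤ P e ∧ P s ≤ R e ∧ ∃ J₁ ⊆ J, ∃ I₂ ⊂ I,
      Icc (P s) (R e) ⊆ ⋃ j ∈ J₁, Icc (A j) (A j + C j) ∧
      (⋃ i ∈ I, Icc (P i) (R i)) ⊆ Icc (P s) (R e) ∪ ⋃ i ∈ I₂, Icc (P i) (R i) ∧
      ∀ i ∈ I₂, Icc (P i) (R i) ⊆ ⋃ j ∈ J \ J₁, Icc (A j) (A j + C j) := by
  classical
  set U := ⋃ j ∈ J, Icc (A j) (A j + C j)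
  obtain ⟨s, hs, hmin⟩ := I.exists_min_image P hI
  have hsK : s ∈ I.filter fun i => Icc (P s) (R i) ⊆ U := mem_filter.2 ⟨hs, hcov s hs⟩
  obtain ⟨e, heK, hmax⟩ := (I.filter fun i => Icc (P s) (R i) ⊆ U).exists_max_image R ⟨s, hsK⟩
  obtain ⟨he, heU⟩ := mem_filter.1 heK
  refine ⟨s, hs, e, he, hmin e he, (hPR s hs).trans (hmax s hsK), J.filter (A · ≤ R e),
    filter_subset _ _, I.filter fun i => ¬ Icc (P s) (R i) ⊆ U,
    filter_ssubset.2 ⟨s, hs, not_not.2 (hcov s hs)⟩, fun x hx => ?_, fun x hx => ?_, ?_⟩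
  · obtain ⟨j, hj, hxj⟩ := mem_iUnion₂.1 (heU hx)
    exact mem_iUnion₂.2 ⟨j, mem_filter.2 ⟨hj, hxj.1.trans hx.2⟩, hxj⟩
  · obtain ⟨i, hi, hx⟩ := mem_iUnion₂.1 hx
    by_cases hiK : Icc (P s) (R i) ⊆ U
    · exact Or.inl ⟨(hmin i hi).trans hx.1, hx.2.trans (hmax i (mem_filter.2 ⟨hi, hiK⟩))⟩
    · exact Or.inr (mem_iUnion₂.2 ⟨i, mem_filter.2 ⟨hi, hiK⟩, hx⟩)
  · intro i hi x hx
    obtain ⟨hi, hiK⟩ := mem_filter.1 hi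
    obtain ⟨y, hy, hyU⟩ := not_subset.1 hiK
    have hey : R e < y := lt_of_not_ge fun h => hyU (heU ⟨hy.1, h⟩)
    have hyi : y < P i := lt_of_not_ge fun h => hyU (hcov i hi ⟨h, hy.2⟩)
    obtain ⟨j, hj, hxj⟩ := mem_iUnion₂.1 (hcov i hi hx)
    refine mem_iUnion₂.2 ⟨j, mem_sdiff.2 ⟨hj, fun hj₁ => hyU ?_⟩, hxj⟩
    exact mem_iUnion₂.2 ⟨j, hj, (mem_filter.1 hj₁).2.trans hey.le, by linarith [hxj.2, hx.1]⟩

theorem exists_div_le_iccCoverable {I : Finset ι} (hI : I.Nonempty) (hPR : ∀ i ∈ I, P i ≤ R i)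
    {J : Finset κ} (hC : ∀ j ∈ J, C j ≤ ℓ)
    (hcov : ∀ i ∈ I, Icc (P i) (R i) ⊆ ⋃ j ∈ J, Icc (A j) (A j + C j)) :
    ∃ s ∈ I, ∃ e ∈ I, ∃ t : ℕ, 0 < t ∧ t ≤ #J ∧ P s ≤ P e ∧ (R e - P s) / t ≤ ℓ ∧
      IccCoverable (⋃ i ∈ I, Icc (P i) (R i)) #J ((R e - P s) / t) := by
  induction I using Finset.strongInduction generalizing J with
  | H I ih =>
    obtain ⟨s, hs, e, he, hse, hsle, J₁, hJ₁, I₂, hI₂, hblock, hsplit, hrest⟩ :=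
      exists_first_block hI hPR hcov
    have ht : 0 < #J₁ := by
      obtain ⟨j, hj, -⟩ := mem_iUnion₂.1 (hblock ⟨le_rfl, hsle⟩)
      exact card_pos.2 ⟨j, hj⟩
    have hle : (R e - P s) / #J₁ ≤ ℓ := by
      rw [div_le_iff₀ (Nat.cast_pos.2 ht), mul_comm]
      exact sub_le_card_mul_of_Icc_subset hsle (fun j hj => hC j (hJ₁ hj)) hblock
    have hcard : #J₁ + #(J \ J₁) = #J := by rw [add_comm, card_sdiff_add_card_eq_card hJ₁]
    have hcover : ∀ r μ, IccCoverable (⋃ i ∈ I₂, Icc (P i) (R i)) #(J \ J₁) r →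
        (R e - P s) / #J₁ ≤ μ → r ≤ μ → IccCoverable (⋃ i ∈ I, Icc (P i) (R i)) #J μ :=
      fun r μ h₂ h₁μ h₂μ => hcard ▸ (((IccCoverable.Icc_div hsle ht).mono h₁μ).union
        (h₂.mono h₂μ)).mono_set hsplit
    rcases I₂.eq_empty_or_nonempty with rfl | hI₂ne
    · refine ⟨s, hs, e, he, #J₁, ht, card_le_card hJ₁, hse, hle, hcover 0 _ ?_ le_rfl ?_⟩
      · simpa using IccCoverable.empty le_rfl
      · exact div_nonneg (sub_nonneg.2 hsle) (Nat.cast_nonneg _)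
    obtain ⟨s', hs', e', he', t', ht', ht'J, hse', hle', hcov'⟩ := ih I₂ hI₂ hI₂ne
      (fun i hi => hPR i (hI₂.subset hi)) (fun j hj => hC j (mem_sdiff.1 hj).1) hrest
    rcases le_total ((R e - P s) / #J₁) ((R e' - P s') / t') with h | h
    · exact ⟨s', hI₂.subset hs', e', hI₂.subset he', t', ht',
        ht'J.trans (card_le_card sdiff_subset), hse', hle', hcover _ _ hcov' h le_rfl⟩
    · exact ⟨s, hs, e, he, #J₁, ht, card_le_card hJ₁, hse, hle, hcover _ _ hcov' le_rfl h⟩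

end Line

section Circle

variable {T : ℝ}

theorem carc_add_zsmul (a b : ℝ) (m : ℤ) : carc T (a + m • T) (b + m • T) = carc T a b := by
  rw [carc, carc, ← image_add_const_Icc, image_image]
  congr 1 with x
  rw [AddCircle.coe_add, AddCircle.coe_zsmul, AddCircle.coe_period, smul_zero, add_zero]

theorem carc_toIocMod (hT : 0 < T) (ξ a c : ℝ) :
    carc T (toIocMod hT ξ a) (toIocMod hT ξ a + c) = carc T a (a + c) := by
  have h := carc_add_zsmul (T := T) (toIocMod hT ξ a) (toIocMod hT ξ a + c) (toIocDiv hT ξ a)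
  rw [← self_sub_toIocMod hT ξ a, add_sub_cancel, add_right_comm, add_sub_cancel] at h
  exact h.symm

theorem Icc_toIocMod_subset_Ioo (hT : 0 < T) {ξ a c : ℝ}
    (hξ : (ξ : AddCircle T) ∉ carc T a (a + c)) :
    Icc (toIocMod hT ξ a) (toIocMod hT ξ a + c) ⊆ Ioo ξ (ξ + T) := by
  have hmem := toIocMod_mem_Ioc hT ξ a
  have hlt : toIocMod hT ξ a + c < ξ + T := lt_of_not_ge fun h => hξ <| by
    rw [← carc_toIocMod hT ξ a c, ← AddCircle.coe_add_period]
    exact mem_image_of_mem _ ⟨hmem.2, h⟩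
  exact fun x hx => ⟨hmem.1.trans_le hx.1, hx.2.trans_lt hlt⟩

theorem coe_mem_carc_iff (hT : 0 < T) {ξ a c x : ℝ} (hξ : (ξ : AddCircle T) ∉ carc T a (a + c))
    (hx : x ∈ Ioo ξ (ξ + T)) :
    (x : AddCircle T) ∈ carc T a (a + c) ↔ x ∈ Icc (toIocMod hT ξ a) (toIocMod hT ξ a + c) := by
  have := Fact.mk hT
  rw [← carc_toIocMod hT ξ a c]
  refine ⟨fun ⟨y, hy, hyx⟩ => ?_, mem_image_of_mem _⟩
  have hy' := Icc_toIocMod_subset_Ioo hT hξ hy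
  rwa [← (AddCircle.coe_eq_coe_iff_of_mem_Ioc (Ioo_subset_Ioc_self hy')
    (Ioo_subset_Ioc_self hx)).1 hyx]

theorem le_sum_of_iUnion_carc_eq_univ (hT : 0 < T) {n : ℕ} {a c : Fin n → ℝ}
    (hc : ∀ j, 0 ≤ c j) (h : ⋃ j, carc T (a j) (a j + c j) = univ) : T ≤ ∑ j, c j := by
  have := Fact.mk hT
  have hball (j : Fin n) :
      carc T (a j) (a j + c j) ⊆
        Metric.closedBall ((a j + c j / 2 : ℝ) : AddCircle T) (c j / 2) := by
    rintro _ ⟨y, hy, rfl⟩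
    rw [Metric.mem_closedBall, dist_eq_norm, ← QuotientAddGroup.mk_sub]
    refine QuotientAddGroup.norm_mk_le_norm.trans ?_
    rw [Real.norm_eq_abs, abs_le]
    constructor <;> linarith [hy.1, hy.2]
  have hvol := (measure_mono (μ := volume) (h.symm.subset.trans (iUnion_mono hball))).trans
    (measure_iUnion_fintype_le _ _)
  simp only [AddCircle.measure_univ, AddCircle.volume_closedBall] at hvol
  rw [← ENNReal.ofReal_le_ofReal_iff (sum_nonneg fun j _ => hc j),
    ENNReal.ofReal_sum_of_nonneg fun j _ => hc j]
  refine hvol.trans (sum_le_sum fun j _ => ENNReal.ofReal_le_ofReal ?_)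
  linarith [min_le_right T (2 * (c j / 2))]

end Circle

def ArcCoverable (T : ℝ) (X : Set (AddCircle T)) (n : ℕ) (ℓ : ℝ) : Prop :=
  ∃ a c : Fin n → ℝ, (∀ j, 0 ≤ c j ∧ c j ≤ ℓ) ∧ X ⊆ ⋃ j, carc T (a j) (a j + c j)

theorem IccCoverable.image_coe {T : ℝ} {X : Set ℝ} {n : ℕ} {ℓ : ℝ} (h : IccCoverable X n ℓ) :
    ArcCoverable T ((↑) '' X) n ℓ :=
  let ⟨a, c, hc, hX⟩ := h
  ⟨a, c, hc, (image_mono hX).trans (image_iUnion.trans_subset subset_rfl)⟩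

theorem ArcCoverable.mono_set {T : ℝ} {X Y : Set (AddCircle T)} {n : ℕ} {ℓ : ℝ}
    (h : ArcCoverable T X n ℓ) (hYX : Y ⊆ X) : ArcCoverable T Y n ℓ :=
  let ⟨a, c, hc, hX⟩ := h
  ⟨a, c, hc, hYX.trans hX⟩

/-- `len (S_{k−k'})` for `x = u k`, `y = v k'`; meaningful for `x, y ∈ [0, T]`. -/
noncomputable def arcLen (T x y : ℝ) : ℝ := if x ≤ y then y - x else T - (x - y)

section Perimeter

variable {T : ℝ} {ι : Type*} {u v : ι → ℝ}

theorem exists_arcLen_eq (hu : ∀ k, 0 ≤ u k) (huv : ∀ k, u k ≤ v k) (hv : ∀ k, v k ≤ T)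
    (hT : 0 < T) {P : ι → ℝ} (hP : ∀ k, ∃ m : ℤ, P k = u k + m * T) {ξ : ℝ}
    (hwin : ∀ k, ξ < P k ∧ P k + (v k - u k) < ξ + T) {s e : ι} (hse : P s ≤ P e) :
    ∃ k k', arcLen T (u k) (v k') = P e + (v e - u e) - P s := by
  obtain ⟨ms, hms⟩ := hP s
  obtain ⟨me, hme⟩ := hP e
  have hlo : (-1 : ℝ) * T ≤ ((me - ms : ℤ) : ℝ) * T := by
    push_cast; linarith [huv e, hu s, hv e]
  have hhi : ((me - ms : ℤ) : ℝ) * T < 2 * T := by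
    push_cast; linarith [hwin s, hwin e, hu e, huv e, huv s, hv s]
  have hm : me - ms = -1 ∨ me - ms = 0 ∨ me - ms = 1 := by
    have h₁ : (-1 : ℤ) ≤ me - ms := by exact_mod_cast le_of_mul_le_mul_right hlo hT
    have h₂ : me - ms < 2 := by exact_mod_cast lt_of_mul_lt_mul_right hhi hT.le
    omega
  have hmT : ∀ d : ℤ, me - ms = d → (me : ℝ) * T = ms * T + d * T := fun d hd => by
    rw [← hd]; push_cast; ring
  rcases hm with h | h | h
  · -- the lifts are a full turn apart: then `S_e` is a point and the block is `S_{e−e}`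
    have := hmT _ h
    refine ⟨e, e, ?_⟩
    rw [arcLen, if_pos (huv e)]
    push_cast at this
    linarith [huv e, hu s, hv e, huv s]
  · have := hmT _ h
    refine ⟨s, e, ?_⟩
    rw [arcLen, if_pos (by push_cast at this; linarith [huv e])]
    push_cast at this
    linarith
  · have := hmT _ h
    refine ⟨s, e, ?_⟩
    rw [arcLen, if_neg (by push_cast at this; linarith [hwin s, hwin e])]
    push_cast at this
    linarith

variable {n : ℕ} {ℓ : ℝ}

theorem arcCoverable_hull [Finite ι] [Nonempty ι] (huv : ∀ k, u k ≤ v k) (hn : 0 < n) :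
    ∃ k k', u k ≤ v k' ∧ ArcCoverable T (⋃ k, carc T (u k) (v k)) n ((v k' - u k) / n) := by
  obtain ⟨k₀, hk₀⟩ := Finite.exists_min u
  obtain ⟨k₁, hk₁⟩ := Finite.exists_max v
  have hle : u k₀ ≤ v k₁ := (hk₀ k₁).trans (huv k₁)
  exact ⟨k₀, k₁, hle, ((IccCoverable.Icc_div hle hn).image_coe).mono_set
    (iUnion_subset fun k => image_mono (Icc_subset_Icc (hk₀ k) (hk₁ k)))⟩

/-- Cutting the circle at a point `ξ` missed by all arcs turns the cover into a cover of
intervals of the line, lifted into the window `(ξ, ξ + T)`. -/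
theorem exists_arcLen_div_le_of_not_mem [Fintype ι] [Nonempty ι] (hu : ∀ k, 0 ≤ u k)
    (huv : ∀ k, u k ≤ v k) (hv : ∀ k, v k ≤ T) (hT : 0 < T) {a c : Fin n → ℝ}
    (hc : ∀ j, 0 ≤ c j ∧ c j ≤ ℓ) (hX : ⋃ k, carc T (u k) (v k) ⊆ ⋃ j, carc T (a j) (a j + c j))
    {ξ : ℝ} (hξ : (ξ : AddCircle T) ∉ ⋃ j, carc T (a j) (a j + c j)) :
    ∃ k k' t, 1 ≤ t ∧ t ≤ n ∧ arcLen T (u k) (v k') / t ≤ ℓ ∧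
      ArcCoverable T (⋃ k, carc T (u k) (v k)) n (arcLen T (u k) (v k') / t) := by
  classical
  set P := fun k => toIocMod hT ξ (u k)
  have hcarc (k : ι) : carc T (u k) (v k) = carc T (P k) (P k + (v k - u k)) := by
    rw [carc_toIocMod, add_sub_cancel]
  have hwin (k : ι) : Icc (P k) (P k + (v k - u k)) ⊆ Ioo ξ (ξ + T) :=
    Icc_toIocMod_subset_Ioo hT fun h => hξ <| hX <| mem_iUnion.2
      ⟨k, by rwa [hcarc, carc_toIocMod]⟩
  have hcov : ∀ k ∈ (univ : Finset ι), Icc (P k) (P k + (v k - u k)) ⊆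
      ⋃ j ∈ (univ : Finset (Fin n)), Icc (toIocMod hT ξ (a j)) (toIocMod hT ξ (a j) + c j) := by
    intro k _ x hx
    obtain ⟨j, hj⟩ :=
      mem_iUnion.1 (hX (mem_iUnion.2 ⟨k, by rw [hcarc]; exact mem_image_of_mem _ hx⟩))
    exact mem_iUnion₂.2 ⟨j, mem_univ j,
      (coe_mem_carc_iff hT (fun h => hξ (mem_iUnion.2 ⟨j, h⟩)) (hwin k hx)).1 hj⟩
  obtain ⟨s, -, e, -, t, ht, htn, hse, hle, hcover⟩ :=
    exists_div_le_iccCoverable (P := P) (R := fun k => P k + (v k - u k)) univ_nonempty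
      (fun k _ => by simpa using huv k) (fun j _ => (hc j).2) hcov
  have hPk (k : ι) : P k ∈ Icc (P k) (P k + (v k - u k)) := ⟨le_rfl, by simpa using huv k⟩
  obtain ⟨k, k', hkk'⟩ := exists_arcLen_eq hu huv hv hT
    (fun k => ⟨-toIocDiv hT ξ (u k), by
      have := self_sub_toIocMod hT ξ (u k)
      rw [zsmul_eq_mul] at this
      push_cast
      linarith⟩)
    (fun k => ⟨(hwin k (hPk k)).1, (hwin k (right_mem_Icc.2 (hPk k).2)).2⟩) hse
  rw [card_univ, Fintype.card_fin] at htn hcover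
  refine ⟨k, k', t, ht, htn, hkk' ▸ hle, hkk' ▸ hcover.image_coe.mono_set ?_⟩
  exact iUnion_subset fun k => (hcarc k).trans_subset
    (image_mono fun x hx => mem_iUnion₂.2 ⟨k, Finset.mem_univ k, hx⟩)

theorem ArcCoverable.exists_arcLen_div_le [Fintype ι] [Nonempty ι] (hu : ∀ k, 0 ≤ u k)
    (huv : ∀ k, u k ≤ v k) (hv : ∀ k, v k ≤ T) (hn : 0 < n)
    (h : ArcCoverable T (⋃ k, carc T (u k) (v k)) n ℓ) :
    ∃ k k' t, 1 ≤ t ∧ t ≤ n ∧ arcLen T (u k) (v k') / t ≤ ℓ ∧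
      ArcCoverable T (⋃ k, carc T (u k) (v k)) n (arcLen T (u k) (v k') / t) := by
  obtain ⟨a, c, hc, hX⟩ := h
  rcases le_or_gt T (∑ j, c j) with hsum | hsum
  · obtain ⟨k, k', hkk', hcov⟩ := arcCoverable_hull huv hn
    refine ⟨k, k', n, hn, le_rfl, ?_, ?_⟩ <;> rw [arcLen, if_pos hkk']
    · rw [div_le_iff₀ (Nat.cast_pos.2 hn)]
      calc v k' - u k ≤ T := by linarith [hu k, hv k']
        _ ≤ ∑ j, c j := hsum
        _ ≤ ∑ _j : Fin n, ℓ := sum_le_sum fun j _ => (hc j).2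
        _ = ℓ * n := by simp [mul_comm]
    · exact hcov
  · have hT : 0 < T := (sum_nonneg fun j _ => (hc j).1).trans_lt hsum
    obtain ⟨ξ, hξ⟩ : ∃ ξ : ℝ, (ξ : AddCircle T) ∉ ⋃ j, carc T (a j) (a j + c j) := by
      by_contra! hall
      exact hsum.not_ge (le_sum_of_iUnion_carc_eq_univ hT (fun j => (hc j).1)
        (eq_univ_of_forall fun x => QuotientAddGroup.induction_on x hall))
    exact exists_arcLen_div_le_of_not_mem hu huv hv hT hc hX hξ

end Perimeter

theorem opt_in_candidate_set_general (T : ℝ) (q n : ℕ) (hq : 0 < q) (hn : 0 < n)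
    (u v : Fin q → ℝ)
    (huv : ∀ k, u k ≤ v k)
    (hsep : ∀ k : Fin q, ∀ h : k.1 + 1 < q, v k ≤ u ⟨k.1 + 1, h⟩)
    (h0 : 0 ≤ u ⟨0, hq⟩)
    (hT : v ⟨q - 1, Nat.sub_lt hq one_pos⟩ ≤ T)
    (len : Fin q → Fin q → ℝ)
    (hlen : ∀ k k', len k k' = if u k ≤ v k' then v k' - u k else T - (u k - v k')) :
    ∃ (k k' : Fin q) (t : ℕ), 1 ≤ t ∧ t ≤ n ∧
      sInf {ℓ : ℝ | ∃ a c : Fin n → ℝ,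
          (∀ j, 0 ≤ c j ∧ c j ≤ ℓ) ∧
          (⋃ k'', carc T (u k'') (v k'')) ⊆ ⋃ j, carc T (a j) (a j + c j)} =
        len k k' / t := by
  have : Nonempty (Fin q) := ⟨⟨0, hq⟩⟩
  obtain ⟨hu, hv⟩ := Fin.monotone_of_interlaced huv hsep
  have hu0 (k : Fin q) : 0 ≤ u k := h0.trans (hu (Nat.zero_le k.1))
  have hvT (k : Fin q) : v k ≤ T := (hv (Nat.le_sub_one_of_lt k.2 : k.1 ≤ q - 1)).trans hT
  obtain ⟨_, _, -, hne⟩ := arcCoverable_hull (T := T) huv hn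
  obtain ⟨⟨k, k', t⟩, ⟨ht, htn⟩, heq⟩ := exists_csInf_eq_of_finite
    (S := {ℓ | ArcCoverable T (⋃ k, carc T (u k) (v k)) n ℓ}) (B := {p | 1 ≤ p.2.2 ∧ p.2.2 ≤ n})
    (fun p : Fin q × Fin q × ℕ => arcLen T (u p.1) (v p.2.1) / p.2.2)
    ((finite_univ.prod (finite_univ.prod (finite_Icc 1 n))).subset
      fun p hp => ⟨trivial, trivial, hp⟩)
    ⟨_, hne⟩ fun ℓ hℓ => by
      obtain ⟨k, k', t, ht, htn, hle, hcov⟩ := hℓ.exists_arcLen_div_le hu0 huv hvT hn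
      exact ⟨(k, k', t), ⟨ht, htn⟩, hcov, hle⟩
  refine ⟨k, k', t, ht, htn, ?_⟩
  rw [hlen]
  exact heq

/-- the optimal value `ℓ*` for a single multi-component perimeter
`P = ⋃ k, [u k, v k] ⊊ ∂R` on a circle of circumference `T` lies in the candidate set
`{ len(S_{k−k'}) / t : 1 ≤ k, k' ≤ q, 1 ≤ t ≤ n }`, where `S_{k−k'}` is the closed
arc from the left endpoint `u k` of `S_k` clockwise to the right endpoint `v k'`
of `S_{k'}` (its length is `v k' − u k`, or `T − (u k − v k')` when wrapping). -/
theorem opt_in_candidate_set (T : ℝ) (q n : ℕ) (hq : 0 < q) (hn : 0 < n)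
    (u v : Fin q → ℝ)
    (huv : ∀ k, u k ≤ v k)
    (hsep : ∀ k : Fin q, ∀ h : k.1 + 1 < q, v k ≤ u ⟨k.1 + 1, h⟩)
    (h0 : 0 ≤ u ⟨0, hq⟩)
    (hT : v ⟨q - 1, Nat.sub_lt hq one_pos⟩ ≤ T)
    (hproper : (⋃ k, carc T (u k) (v k)) ≠ Set.univ)
    (len : Fin q → Fin q → ℝ)
    (hlen : ∀ k k', len k k' = if u k ≤ v k' then v k' - u k else T - (u k - v k')) :
    ∃ (k k' : Fin q) (t : ℕ), 1 ≤ t ∧ t ≤ n ∧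
      sInf {ℓ : ℝ | ∃ a c : Fin n → ℝ,
          (∀ j, 0 ≤ c j ∧ c j ≤ ℓ) ∧
          (⋃ k'', carc T (u k'') (v k'')) ⊆ ⋃ j, carc T (a j) (a j + c j)} =
        len k k' / t :=
  opt_in_candidate_set_general T q n hq hn u v huv hsep h0 hT len hlen
end

section
/- Gap-normalization (Lemma 1): there exists an optimal cover C* of P such that for every gap G (maximal connected component of ∂R \ P) and every C_j* ∈ C*, either G ⊆ C_j* or G ∩ C_j* = ∅. -/
/-!
By compactness an optimal cover exists: each arc can be moved to start in `[0, T]` and cut to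
length at most `T`, and the covers so normalized form a compact set on which the longest arc
length attains its minimum. Each arc of an optimal cover is then shrunk to the smallest arc
containing the part of the perimeter it covers. This is still an optimal cover, and both ends of
every arc now lie on the perimeter, hence outside every gap. An arc whose ends avoid a gap either
contains the gap or misses it.
-/

open Set

namespace GapNormalization

section Circle

variable {T : ℝ}

lemma coe_add_zsmul_period (x : ℝ) (k : ℤ) : ((x + k • T : ℝ) : AddCircle T) = x := by
  rw [AddCircle.coe_add, AddCircle.coe_zsmul, AddCircle.coe_period, smul_zero, add_zero]

lemma coe_sub_zsmul_period (x : ℝ) (k : ℤ) : ((x - k • T : ℝ) : AddCircle T) = x := by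
  rw [AddCircle.coe_sub, AddCircle.coe_zsmul, AddCircle.coe_period, smul_zero, sub_zero]

lemma exists_eq_add_zsmul_of_coe_eq {x y : ℝ} (h : (x : AddCircle T) = y) :
    ∃ k : ℤ, y = x + k • T := by
  obtain ⟨k, hk⟩ := AddSubgroup.mem_zmultiples_iff.mp (QuotientAddGroup.eq.mp h)
  exact ⟨k, by linarith⟩

lemma carc_sub_zsmul (a b : ℝ) (k : ℤ) : carc T (a - k • T) (b - k • T) = carc T a b := by
  ext x
  constructor
  · rintro ⟨t, ht, rfl⟩
    exact ⟨t + k • T, ⟨by linarith [ht.1], by linarith [ht.2]⟩, coe_add_zsmul_period t k⟩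
  · rintro ⟨t, ht, rfl⟩
    exact ⟨t - k • T, ⟨by linarith [ht.1], by linarith [ht.2]⟩, coe_sub_zsmul_period t k⟩

lemma isClosed_carc (a b : ℝ) : IsClosed (carc T a b) :=
  (isCompact_Icc.image (AddCircle.continuous_mk' T)).isClosed

lemma carc_add_period (hT : 0 < T) (a : ℝ) : carc T a (a + T) = univ :=
  haveI : Fact (0 < T) := ⟨hT⟩
  AddCircle.coe_image_Icc_eq T a

lemma exists_normalized_carc_superset (hT : 0 < T) (a : ℝ) {c : ℝ} (hc : 0 ≤ c) :
    ∃ a' c', a' ∈ Icc 0 T ∧ 0 ≤ c' ∧ c' ≤ c ∧ c' ≤ T ∧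
      carc T a (a + c) ⊆ carc T a' (a' + c') := by
  obtain ⟨k, ha⟩ : ∃ k : ℤ, a - k • T ∈ Ico 0 T :=
    ⟨toIcoDiv hT 0 a, by
      simpa only [self_sub_toIcoDiv_zsmul, zero_add] using toIcoMod_mem_Ico hT 0 a⟩
  refine ⟨a - k • T, min c T, Ico_subset_Icc_self ha, le_min hc hT.le, min_le_left _ _,
    min_le_right _ _, ?_⟩
  rcases le_total c T with hcT | hTc
  · rw [min_eq_left hcT, sub_add_eq_add_sub, carc_sub_zsmul]
  · rw [min_eq_right hTc, carc_add_period hT]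
    exact subset_univ _

/-- If the arc meets the gap, the lift of the gap through a common point lies between the ends
of the arc, since neither end lies in the gap. -/
lemma oarc_subset_or_disjoint_carc {g₁ g₂ α β : ℝ}
    (hα : (α : AddCircle T) ∉ oarc T g₁ g₂) (hβ : (β : AddCircle T) ∉ oarc T g₁ g₂) :
    oarc T g₁ g₂ ⊆ carc T α β ∨ Disjoint (oarc T g₁ g₂) (carc T α β) := by
  refine or_iff_not_imp_right.mpr fun hmeet => ?_
  obtain ⟨_, ⟨t, ht, rfl⟩, s, hs, hts⟩ := not_disjoint_iff.mp hmeet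
  obtain ⟨k, rfl⟩ := exists_eq_add_zsmul_of_coe_eq hts.symm
  have hαk : α ≤ g₁ + k • T := by
    by_contra! h
    exact hα ⟨α - k • T, ⟨by linarith, by linarith [hs.1, ht.2]⟩,
      coe_sub_zsmul_period α k⟩
  have hβk : g₂ + k • T ≤ β := by
    by_contra! h
    exact hβ ⟨β - k • T, ⟨by linarith [hs.2, ht.1], by linarith⟩,
      coe_sub_zsmul_period β k⟩
  rintro _ ⟨t', ht', rfl⟩
  exact ⟨t' + k • T, ⟨by linarith [ht'.1], by linarith [ht'.2]⟩, coe_add_zsmul_period t' k⟩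

lemma eq_zero_of_add_zsmul_mem_Ioo {s t : ℝ} {k : ℤ} (ht : t ∈ Icc s (s + T))
    (hk : t + k • T ∈ Ioo s (s + T)) : k = 0 := by
  obtain ⟨h₁, h₂⟩ := ht
  obtain ⟨h₃, h₄⟩ := hk
  have hT : 0 < T := by linarith
  rw [zsmul_eq_mul] at h₃ h₄
  have hl : ((-1 : ℤ) : ℝ) < k := by push_cast; nlinarith
  have hu : (k : ℝ) < (1 : ℤ) := by push_cast; nlinarith
  have := Int.cast_lt.mp hl
  have := Int.cast_lt.mp hu
  omega

lemma disjoint_image_coe_of_subset {A B : Set ℝ} {s : ℝ} (hA : A ⊆ Icc s (s + T))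
    (hB : B ⊆ Ioo s (s + T)) (hAB : Disjoint A B) :
    Disjoint ((↑) '' A : Set (AddCircle T)) ((↑) '' B) := by
  refine disjoint_left.mpr ?_
  rintro _ ⟨t, htA, rfl⟩ ⟨t', htB, htt'⟩
  obtain ⟨k, rfl⟩ := exists_eq_add_zsmul_of_coe_eq htt'.symm
  obtain rfl := eq_zero_of_add_zsmul_mem_Ioo (hA htA) (hB htB)
  exact hAB.ne_of_mem htA (by simpa using htB) rfl

/-- The witness is the hull of the lift of `P` in `[a, a + c]`, or the point `x₀` when that lift
is empty. -/
lemma exists_carc_endpoints_mem {P : Set (AddCircle T)} (hP : IsClosed P) {x₀ : ℝ}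
    (hx₀ : (x₀ : AddCircle T) ∈ P) (a : ℝ) {c : ℝ} (hc : 0 ≤ c) :
    ∃ a' c', 0 ≤ c' ∧ c' ≤ c ∧ P ∩ carc T a (a + c) ⊆ carc T a' (a' + c') ∧
      (a' : AddCircle T) ∈ P ∧ ((a' + c' : ℝ) : AddCircle T) ∈ P := by
  set S := Icc a (a + c) ∩ (↑) ⁻¹' P
  have hS : IsCompact S := isCompact_Icc.inter_right (hP.preimage (AddCircle.continuous_mk' T))
  rcases S.eq_empty_or_nonempty with hSe | hSne
  · refine ⟨x₀, 0, le_rfl, hc, ?_, hx₀, by simpa using hx₀⟩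
    rintro _ ⟨hxP, t, ht, rfl⟩
    exact absurd (hSe ▸ ⟨ht, hxP⟩ : t ∈ (∅ : Set ℝ)) (notMem_empty t)
  obtain ⟨α, hα, hαS⟩ := hS.exists_isLeast hSne
  obtain ⟨β, hβ, hβS⟩ := hS.exists_isGreatest hSne
  refine ⟨α, β - α, sub_nonneg.mpr (hαS hβ), by linarith [hα.1.1, hβ.1.2], ?_, hα.2, ?_⟩
  · rintro _ ⟨hxP, t, ht, rfl⟩
    rw [add_sub_cancel]
    exact ⟨t, ⟨hαS ⟨ht, hxP⟩, hβS ⟨ht, hxP⟩⟩, rfl⟩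
  · simpa using hβ.2

lemma isClosed_setOf_mem_carc (x : AddCircle T) :
    IsClosed {p : ℝ × ℝ | 0 ≤ p.2 ∧ x ∈ carc T p.1 (p.1 + p.2)} := by
  have : {p : ℝ × ℝ | 0 ≤ p.2 ∧ x ∈ carc T p.1 (p.1 + p.2)} = {p | 0 ≤ p.2} ∩
      Prod.fst '' {q : (ℝ × ℝ) × Icc (0 : ℝ) 1 |
        ((q.1.1 + q.2 * q.1.2 : ℝ) : AddCircle T) = x} := by
    ext ⟨a, c⟩
    simp only [mem_ofPred_eq, mem_inter_iff, mem_image, Prod.exists, Subtype.exists, mem_Icc,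
      exists_and_right, exists_eq_right]
    constructor
    · rintro ⟨hc, t, ht, rfl⟩
      refine ⟨hc, (t - a) / c,
        ⟨div_nonneg (by linarith [ht.1]) hc, div_le_one_of_le₀ (by linarith [ht.2]) hc⟩, ?_⟩
      rw [div_mul_cancel_of_imp fun h => by subst h; linarith [ht.1, ht.2], add_sub_cancel]
    · rintro ⟨hc, s, hs, rfl⟩
      exact ⟨hc, a + s * c, ⟨by nlinarith [hs.1], by nlinarith [hs.2]⟩, rfl⟩
  rw [this]
  exact (isClosed_le continuous_const continuous_snd).inter
    (isClosedMap_fst_of_compactSpace _ (isClosed_eq (by fun_prop) continuous_const))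

end Circle

section Cover

variable {m n : ℕ} {T : Fin m → ℝ} {P : (i : Fin m) → Set (AddCircle (T i))}

/-- Robot `j` is assigned the arc `[a j, a j + c j]` of circle `r j`. -/
def IsCover (T : Fin m → ℝ) (P : (i : Fin m) → Set (AddCircle (T i))) (r : Fin n → Fin m)
    (a c : Fin n → ℝ) : Prop :=
  ∀ i, P i ⊆ ⋃ j, ⋃ (_ : r j = i), carc (T i) (a j) (a j + c j)

def feasibleLengths (T : Fin m → ℝ) (P : (i : Fin m) → Set (AddCircle (T i))) (n : ℕ) :
    Set ℝ :=
  {ℓ | ∃ (r : Fin n → Fin m) (a c : Fin n → ℝ), (∀ j, 0 ≤ c j ∧ c j ≤ ℓ) ∧ IsCover T P r a c}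

lemma IsCover.of_inter_subset {r : Fin n → Fin m} {a c a' c' : Fin n → ℝ}
    (h : IsCover T P r a c)
    (hsub : ∀ j, P (r j) ∩ carc (T (r j)) (a j) (a j + c j) ⊆
      carc (T (r j)) (a' j) (a' j + c' j)) :
    IsCover T P r a' c' := by
  intro i x hx
  obtain ⟨j, rfl, hxj⟩ : ∃ j, r j = i ∧ x ∈ carc (T i) (a j) (a j + c j) := by
    simpa using h i hx
  exact mem_iUnion₂.mpr ⟨j, rfl, hsub j ⟨hx, hxj⟩⟩

lemma isCover_of_surjective (hT : ∀ i, 0 < T i) {r : Fin n → Fin m}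
    (hr : Function.Surjective r) : IsCover T P r 0 (fun j => T (r j)) := by
  intro i x _
  obtain ⟨j, rfl⟩ := hr i
  exact mem_iUnion₂.mpr ⟨j, rfl, by simpa using (carc_add_period (hT (r j)) 0).ge (mem_univ x)⟩

lemma isClosed_setOf_isCover :
    IsClosed {p : (Fin n → Fin m) × (Fin n → ℝ) × (Fin n → ℝ) |
      (∀ j, 0 ≤ p.2.2 j) ∧ IsCover T P p.1 p.2.1 p.2.2} := by
  have : {p : (Fin n → Fin m) × (Fin n → ℝ) × (Fin n → ℝ) |
      (∀ j, 0 ≤ p.2.2 j) ∧ IsCover T P p.1 p.2.1 p.2.2} =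
      (⋂ j, {p | 0 ≤ p.2.2 j}) ∩ ⋂ i, ⋂ x ∈ P i, ⋃ j, {p | p.1 j = i} ∩
        (fun p => (p.2.1 j, p.2.2 j)) ⁻¹' {q | 0 ≤ q.2 ∧ x ∈ carc (T i) q.1 (q.1 + q.2)} := by
    ext p
    simp only [IsCover, subset_def, mem_iUnion, mem_inter_iff, mem_iInter, mem_preimage,
      mem_ofPred_eq, exists_prop]
    constructor
    · rintro ⟨hc, hcov⟩
      refine ⟨hc, fun i x hx => ?_⟩
      obtain ⟨j, rfl, hxj⟩ := hcov i x hx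
      exact ⟨j, rfl, hc j, hxj⟩
    · rintro ⟨hc, hcov⟩
      refine ⟨hc, fun i x hx => ?_⟩
      obtain ⟨j, rfl, -, hxj⟩ := hcov i x hx
      exact ⟨j, rfl, hxj⟩
  rw [this]
  refine (isClosed_iInter fun j => isClosed_le continuous_const (by fun_prop)).inter
    (isClosed_iInter fun i => isClosed_biInter fun x _ => isClosed_iUnion_of_finite fun j => ?_)
  exact (isClosed_eq (by fun_prop) continuous_const).inter
    ((isClosed_setOf_mem_carc x).preimage (by fun_prop))

lemma IsCover.exists_normalized (hT : ∀ i, 0 < T i) {r : Fin n → Fin m} {a c : Fin n → ℝ}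
    (h : IsCover T P r a c) (hc : ∀ j, 0 ≤ c j) :
    ∃ a' c' : Fin n → ℝ, (∀ j, a' j ∈ Icc 0 (T (r j)) ∧ 0 ≤ c' j ∧ c' j ≤ c j ∧ c' j ≤ T (r j)) ∧
      IsCover T P r a' c' := by
  choose a' c' ha' hc' hcc' hcT hsub using
    fun j => exists_normalized_carc_superset (hT (r j)) (a j) (hc j)
  exact ⟨a', c', fun j => ⟨ha' j, hc' j, hcc' j, hcT j⟩,
    h.of_inter_subset fun j => inter_subset_right.trans (hsub j)⟩

theorem exists_isCover_le_sInf_feasibleLengths (hT : ∀ i, 0 < T i) (hm : 0 < m) (hmn : m ≤ n) :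
    ∃ (r : Fin n → Fin m) (a c : Fin n → ℝ),
      (∀ j, 0 ≤ c j ∧ c j ≤ sInf (feasibleLengths T P n)) ∧ IsCover T P r a c := by
  obtain ⟨M, hM⟩ := Finite.exists_le T
  set K := (univ ×ˢ (univ.pi fun _ => Icc 0 M) ×ˢ (univ.pi fun _ => Icc 0 M)) ∩
    {p : (Fin n → Fin m) × (Fin n → ℝ) × (Fin n → ℝ) |
      (∀ j, 0 ≤ p.2.2 j) ∧ IsCover T P p.1 p.2.1 p.2.2}
  have hK : IsCompact K := (isCompact_univ.prod ((isCompact_univ_pi fun _ => isCompact_Icc).prod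
    (isCompact_univ_pi fun _ => isCompact_Icc))).inter_right isClosed_setOf_isCover
  have hmem : ∀ r a c, (∀ j, a j ∈ Icc 0 (T (r j)) ∧ 0 ≤ c j ∧ c j ≤ T (r j)) →
      IsCover T P r a c → (r, a, c) ∈ K := fun r a c hb hcov =>
    ⟨⟨mem_univ _, fun j _ => ⟨(hb j).1.1, (hb j).1.2.trans (hM _)⟩,
      fun j _ => ⟨(hb j).2.1, (hb j).2.2.trans (hM _)⟩⟩, fun j => (hb j).2.1, hcov⟩
  have hKne : K.Nonempty := by
    have : Nonempty (Fin m) := ⟨⟨0, hm⟩⟩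
    have hr := Function.invFun_surjective (Fin.castLE_injective hmn)
    exact ⟨_, hmem _ 0 _ (fun j => ⟨⟨le_rfl, (hT _).le⟩, (hT _).le, le_rfl⟩)
      (isCover_of_surjective hT hr)⟩
  obtain ⟨⟨r, a, c⟩, hpK, hpmin⟩ := hK.exists_isMinOn hKne
    (continuous_norm.comp (continuous_snd.comp continuous_snd)).continuousOn
  have hc : ∀ j, c j ≤ ‖c‖ := fun j => by
    simpa [abs_of_nonneg (hpK.2.1 j)] using norm_le_pi_norm c j
  have hleast : IsLeast (feasibleLengths T P n) ‖c‖ := by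
    refine ⟨⟨r, a, c, fun j => ⟨hpK.2.1 j, hc j⟩, hpK.2.2⟩, ?_⟩
    rintro ℓ ⟨r', a', c', hc', hcov'⟩
    obtain ⟨a'', c'', hb, hcov''⟩ := hcov'.exists_normalized hT fun j => (hc' j).1
    have hℓ : 0 ≤ ℓ := (hc' ⟨0, hm.trans_le hmn⟩).1.trans (hc' _).2
    calc ‖c‖ ≤ ‖c''‖ :=
          hpmin (hmem r' a'' c'' (fun j => ⟨(hb j).1, (hb j).2.1, (hb j).2.2.2⟩) hcov'')
      _ ≤ ℓ := (pi_norm_le_iff_of_nonneg hℓ).mpr fun j => by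
        simpa [abs_of_nonneg (hb j).2.1] using (hb j).2.2.1.trans (hc' j).2
  exact ⟨r, a, c, fun j => ⟨hpK.2.1 j, (hc j).trans_eq hleast.csInf_eq.symm⟩, hpK.2.2⟩

end Cover

section Perimeter

variable {Q : ℕ} {u v : Fin Q → ℝ} (huv : ∀ k, u k ≤ v k)
  (hsep : ∀ k : Fin Q, ∀ h : k.1 + 1 < Q, v k ≤ u ⟨k.1 + 1, h⟩)

include huv hsep

lemma v_le_u_of_lt {l l' : Fin Q} (h : l < l') : v l ≤ u l' := by
  obtain ⟨b, hb⟩ := l'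
  change l.1 + 1 ≤ b at h
  induction b, h using Nat.le_induction with
  | base => exact hsep l hb
  | succ b hlb ih => exact (ih (by omega)).trans ((huv _).trans (hsep ⟨b, by omega⟩ hb))

lemma monotone_u : Monotone u := fun l l' h => by
  rcases h.eq_or_lt with rfl | h
  exacts [le_rfl, (huv l).trans (v_le_u_of_lt huv hsep h)]

lemma monotone_v : Monotone v := fun l l' h => by
  rcases h.eq_or_lt with rfl | h
  exacts [le_rfl, (v_le_u_of_lt huv hsep h).trans (huv l')]

/-- Every perimeter component and every gap lifts into the period `[u 0, u 0 + T]`, where they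
are disjoint intervals. -/
lemma disjoint_perimeter_gap {T : ℝ} (hQ : 0 < Q)
    (hspan : v ⟨Q - 1, Nat.sub_lt hQ one_pos⟩ ≤ u ⟨0, hQ⟩ + T) (k : Fin Q) :
    Disjoint (⋃ l, carc T (u l) (v l))
      (oarc T (v k) (if h : k.1 + 1 < Q then u ⟨k.1 + 1, h⟩ else u ⟨0, hQ⟩ + T)) := by
  set g := if h : k.1 + 1 < Q then u ⟨k.1 + 1, h⟩ else u ⟨0, hQ⟩ + T
  have hlast : ∀ l : Fin Q, v l ≤ u ⟨0, hQ⟩ + T := fun l =>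
    (monotone_v huv hsep (Fin.mk_le_mk.mpr (by omega) : l ≤ ⟨Q - 1, _⟩)).trans hspan
  have hg : g ≤ u ⟨0, hQ⟩ + T := by
    by_cases h : k.1 + 1 < Q
    · simpa only [g, dif_pos h] using (huv _).trans (hlast _)
    · simp only [g, dif_neg h, le_rfl]
  have hsplit : ∀ l, v l ≤ v k ∨ g ≤ u l := by
    intro l
    by_cases h : k.1 + 1 < Q
    · rcases le_or_gt l k with hl | hl
      · exact Or.inl (monotone_v huv hsep hl)
      · simpa only [g, dif_pos h] using
          Or.inr (monotone_u huv hsep (Fin.mk_le_mk.mpr (by omega) : ⟨k.1 + 1, h⟩ ≤ l))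
    · exact Or.inl (monotone_v huv hsep (Fin.mk_le_mk.mpr (by omega) : l ≤ k))
  refine disjoint_iUnion_left.mpr fun l => disjoint_image_coe_of_subset (s := u ⟨0, hQ⟩)
    (Icc_subset_Icc (monotone_u huv hsep (Nat.zero_le l.1)) (hlast l))
    (Ioo_subset_Ioo ((huv _).trans (monotone_v huv hsep (Nat.zero_le k.1))) hg) ?_
  refine disjoint_left.mpr fun t ht ht' => ?_
  rcases hsplit l with h | h
  · linarith [ht.2, ht'.1]
  · linarith [ht.1, ht'.2]

end Perimeter

end GapNormalization

open GapNormalization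

/-- Lemma 1, gap normalization: `∂R` is a disjoint union of `m`
circles of circumferences `T i`, carrying perimeters `P i = ⋃ k, [u i k, v i k]`
with gaps in between.  There exists an optimal cover — `n` robots, robot `j`
assigned a closed arc `[a j, a j + c j]` on circle `r j`, all perimeters covered,
every arc of length at most `ℓ* = sInf {feasible ℓ}` — such that every gap is
either entirely contained in or disjoint from each covering arc on its circle. -/
theorem gap_normalized_optimal_cover_exists (m n : ℕ) (hm : 0 < m) (hmn : m ≤ n)
    (T : Fin m → ℝ) (hT : ∀ i, 0 < T i)
    (q : Fin m → ℕ) (hq : ∀ i, 0 < q i)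
    (u v : (i : Fin m) → Fin (q i) → ℝ)
    (huv : ∀ i k, u i k ≤ v i k)
    (hsep : ∀ i, ∀ k : Fin (q i), ∀ h : k.1 + 1 < q i, v i k ≤ u i ⟨k.1 + 1, h⟩)
    (h0 : ∀ i, 0 ≤ u i ⟨0, hq i⟩)
    (hTi : ∀ i, v i ⟨q i - 1, Nat.sub_lt (hq i) one_pos⟩ ≤ T i) :
    ∃ (r : Fin n → Fin m) (a c : Fin n → ℝ),
      (∀ j, 0 ≤ c j ∧ c j ≤ sInf {ℓ : ℝ | ∃ (r' : Fin n → Fin m) (a' c' : Fin n → ℝ),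
          (∀ j', 0 ≤ c' j' ∧ c' j' ≤ ℓ) ∧
          ∀ i, (⋃ k, carc (T i) (u i k) (v i k)) ⊆
            ⋃ j', ⋃ (_ : r' j' = i), carc (T i) (a' j') (a' j' + c' j')}) ∧
      (∀ i, (⋃ k, carc (T i) (u i k) (v i k)) ⊆
          ⋃ j, ⋃ (_ : r j = i), carc (T i) (a j) (a j + c j)) ∧
      (∀ i, ∀ k : Fin (q i), ∀ j, r j = i →
        oarc (T i) (v i k)
            (if h : k.1 + 1 < q i then u i ⟨k.1 + 1, h⟩ else u i ⟨0, hq i⟩ + T i)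
          ⊆ carc (T i) (a j) (a j + c j) ∨
        Disjoint
          (oarc (T i) (v i k)
            (if h : k.1 + 1 < q i then u i ⟨k.1 + 1, h⟩ else u i ⟨0, hq i⟩ + T i))
          (carc (T i) (a j) (a j + c j))) := by
  set P : (i : Fin m) → Set (AddCircle (T i)) := fun i => ⋃ k, carc (T i) (u i k) (v i k)
  obtain ⟨r, a, c, hc, hcov⟩ := exists_isCover_le_sInf_feasibleLengths (P := P) hT hm hmn
  have hP : ∀ i, IsClosed (P i) := fun i => isClosed_iUnion_of_finite fun k => isClosed_carc _ _
  have hu₀ : ∀ i, (u i ⟨0, hq i⟩ : AddCircle (T i)) ∈ P i := fun i =>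
    mem_iUnion.mpr ⟨⟨0, hq i⟩, _, left_mem_Icc.mpr (huv i _), rfl⟩
  choose a' c' hc' hcc' hsub ha' hb' using
    fun j => exists_carc_endpoints_mem (hP (r j)) (hu₀ (r j)) (a j) (hc j).1
  refine ⟨r, a', c', fun j => ⟨hc' j, (hcc' j).trans (hc j).2⟩, hcov.of_inter_subset hsub, ?_⟩
  rintro i k j rfl
  have hgap := disjoint_perimeter_gap (T := T (r j)) (huv (r j)) (hsep (r j)) (hq (r j))
    (by linarith [h0 (r j), hTi (r j)]) k
  exact oarc_subset_or_disjoint_carc (hgap.notMem_of_mem_left (ha' j))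
    (hgap.notMem_of_mem_left (hb' j))
end
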